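/- Let a = (a_0, a_t, a_1, a_∞) ∈ ℂ⁴, and let (i,j,k) be a permutation of (0,t,1). Define the half-monodromy map g_{ij}: ℂ³ → ℂ³ whose image Y satisfies Y_i = X_j, Y_j = X_i − F_{X_i}(X;a), Y_k = X_k, and let a' be the parameter obtained from a by swapping a_i and a_j (with a_k and a_∞ unchanged). Then F(g_{ij}(X); a') = F(X; a) for all X ∈ ℂ³. -/

import Mathlib

noncomputable section

/-- The Fricke polynomial `F(X; a)` of the Painlevé VI character variety, where
the indices `0, 1, 2` of `Fin 3` stand for the labels `0, t, 1`, and `aI = a_∞`. -/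
def Fr (X a : Fin 3 → ℂ) (aI : ℂ) : ℂ :=
  X 0 * X 1 * X 2 + X 0 ^ 2 + X 1 ^ 2 + X 2 ^ 2
    - (a 0 * aI + a 1 * a 2) * X 0 - (a 1 * aI + a 2 * a 0) * X 1 - (a 2 * aI + a 0 * a 1) * X 2
    + (a 0 * a 1 * a 2 * aI + a 0 ^ 2 + a 1 ^ 2 + a 2 ^ 2 + aI ^ 2 - 4)

/-- The partial derivative `F_{X_i} = X_j X_k + 2 X_i - θ_i` of the Fricke polynomial,
for `(i,j,k)` a permutation of the three indices. -/
def FrD (X a : Fin 3 → ℂ) (aI : ℂ) (i j k : Fin 3) : ℂ :=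
  X j * X k + 2 * X i - (a i * aI + a j * a k)

/-! `F` is invariant under permuting the labels of `X` and `a` simultaneously, so it suffices to
treat `(i, j, k) = (0, t, 1)`. There `g_{0t}` is the Vieta involution `X₀ ↦ θ₀ - X_t X₁ - X₀`
(which is `X₀ ↦ X₀ - F_{X₀}`), exchanging the two roots of `F` as a monic quadratic in `X₀`,
followed by the transposition of the labels `0` and `t`. -/

open Equiv Function

lemma Fr_comp_swap (X a : Fin 3 → ℂ) (aI : ℂ) {i j : Fin 3} (hij : i ≠ j) :
    Fr (X ∘ swap i j) (a ∘ swap i j) aI = Fr X a aI := by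
  fin_cases i <;> fin_cases j <;> simp_all [Fr, swap_apply_of_ne_of_ne] <;> ring

lemma Fr_comp_perm (X a : Fin 3 → ℂ) (aI : ℂ) (σ : Perm (Fin 3)) :
    Fr (X ∘ σ) (a ∘ σ) aI = Fr X a aI := by
  induction σ using Perm.swap_induction_on generalizing X a with
  | one => rfl
  | swap_mul f i j hij ih =>
    rw [Perm.coe_mul, ← comp_assoc, ← comp_assoc, ih, Fr_comp_swap X a aI hij]

lemma Fr_update_sub_FrD (X a : Fin 3 → ℂ) (aI : ℂ) :
    Fr (update X 0 (X 0 - FrD X a aI 0 1 2)) a aI = Fr X a aI := by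
  simp only [Fr, FrD, update_self]
  rw [update_of_ne (by decide), update_of_ne (by decide)]
  ring

/-- **The half-monodromy map `g_{ij}` preserves the Fricke polynomial**, up to swapping
the parameters `a_i ↔ a_j`: with `(i,j,k) = (σ 0, σ 1, σ 2)` a permutation of the labels
`(0,t,1)`, if `Y_i = X_j`, `Y_j = X_i − F_{X_i}(X;a)`, `Y_k = X_k` and `a'` is `a` with
`a_i, a_j` swapped, then `F(Y; a') = F(X; a)`. -/
theorem half_monodromy_preserves_fricke
    (a : Fin 3 → ℂ) (aI : ℂ) (σ : Equiv.Perm (Fin 3)) (X Y a' : Fin 3 → ℂ)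
    (hYi : Y (σ 0) = X (σ 1))
    (hYj : Y (σ 1) = X (σ 0) - FrD X a aI (σ 0) (σ 1) (σ 2))
    (hYk : Y (σ 2) = X (σ 2))
    (hai : a' (σ 0) = a (σ 1)) (haj : a' (σ 1) = a (σ 0)) (hak : a' (σ 2) = a (σ 2)) :
    Fr Y a' aI = Fr X a aI := by
  set Z := update (X ∘ σ) 0 ((X ∘ σ) 0 - FrD (X ∘ σ) (a ∘ σ) aI 0 1 2)
  have hY : Y ∘ σ = Z ∘ swap 0 1 := by
    funext i; fin_cases i <;> simp [Z, FrD, swap_apply_of_ne_of_ne, hYi, hYj, hYk]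
  have ha : a' ∘ σ = (a ∘ σ) ∘ swap 0 1 := by
    funext i; fin_cases i <;> simp [swap_apply_of_ne_of_ne, hai, haj, hak]
  calc Fr Y a' aI = Fr (Z ∘ swap 0 1) ((a ∘ σ) ∘ swap 0 1) aI := by
        rw [← hY, ← ha, Fr_comp_perm]
    _ = Fr (X ∘ σ) (a ∘ σ) aI := by
        rw [Fr_comp_swap _ _ _ (by decide), Fr_update_sub_FrD]
    _ = Fr X a aI := Fr_comp_perm X a aI σ
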